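/- arXiv:2010.14757 — 7 statements merged into one kernel-verified Lean document; each statement's English description precedes it below -/
import Mathlib

section
/- For every x ∈ G, the number of indices i ∈ Ω fixed by ρ(x) (i.e. with ρ(x)(i) = i) equals the number of indices j ∈ Ω fixed by σ(x) (i.e. with σ(x)(j) = j). -/
/-!
The invariance of `A` says exactly that the permutation matrices `P` of `ρ x` and `Q` of `σ x`
satisfy `P * A = A * Q`. Since `A` is invertible, `P` and `Q` are similar and so have the same
trace; the trace of a permutation matrix counts the fixed points, and in characteristic zero
this count is read off from its image in `K`.
-/

section

open Matrix Equiv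

variable {Ω R : Type*} [Fintype Ω] [DecidableEq Ω]

theorem Equiv.Perm.permMatrix_mul_eq_mul_permMatrix [Semiring R] {p q : Perm Ω}
    {A : Matrix Ω Ω R} (h : ∀ i j, A (p i) (q j) = A i j) :
    p.permMatrix R * A = A * q.permMatrix R := by
  rw [PEquiv.toMatrix_toPEquiv_mul, PEquiv.mul_toMatrix_toPEquiv]
  ext i j
  simpa using h i (q.symm j)

theorem Matrix.trace_eq_of_mul_eq_mul [CommRing R] {A P Q : Matrix Ω Ω R} (hA : IsUnit A)
    (h : P * A = A * Q) : trace P = trace Q := by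
  have hP : P = A * Q * A⁻¹ := by
    rw [← h, Matrix.mul_assoc, mul_nonsing_inv A ((isUnit_iff_isUnit_det A).mp hA),
      Matrix.mul_one]
  rw [hP, trace_conj hA]

theorem Equiv.Perm.card_fixedPoints_eq_trace_permMatrix [CommRing R] (p : Perm Ω) :
    ((Finset.univ.filter fun i : Ω => p i = i).card : R) = trace (p.permMatrix R) := by
  rw [trace_permutation, Set.ncard_eq_toFinset_card']
  congr 2
  ext i
  simp [Function.IsFixedPt]

theorem Equiv.Perm.card_fixedPoints_eq_of_intertwining [CommRing R] [CharZero R]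
    (p q : Perm Ω) {A : Matrix Ω Ω R} (hA : IsUnit A) (h : ∀ i j, A (p i) (q j) = A i j) :
    (Finset.univ.filter fun i : Ω => p i = i).card
      = (Finset.univ.filter fun j : Ω => q j = j).card := by
  have htrace := trace_eq_of_mul_eq_mul hA (Perm.permMatrix_mul_eq_mul_permMatrix h)
  rw [← p.card_fixedPoints_eq_trace_permMatrix, ← q.card_fixedPoints_eq_trace_permMatrix]
    at htrace
  exact_mod_cast htrace

end

/-- **Brauer Permutation Lemma (fixed-point count).**
Let `Ω` be a finite set, `K` a field of characteristic zero, `G` a group, and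
`ρ, σ : G → Sym(Ω)` two actions of `G` on `Ω`.  Suppose `A` is an invertible
`Ω × Ω` matrix over `K` with `A (ρ x i) (σ x j) = A i j` for all `x, i, j`.
Then for every `x ∈ G` the number of points fixed by `ρ x` equals the number of
points fixed by `σ x`. -/
theorem stmt0 {Ω : Type*} [Fintype Ω] [DecidableEq Ω]
    {K : Type*} [Field K] [CharZero K]
    {G : Type*} [Group G] (ρ σ : G →* Equiv.Perm Ω)
    (A : Matrix Ω Ω K) (hA : IsUnit A)
    (h : ∀ (x : G) (i j : Ω), A (ρ x i) (σ x j) = A i j) (x : G) :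
    (Finset.univ.filter fun i : Ω => ρ x i = i).card
      = (Finset.univ.filter fun j : Ω => σ x j = j).card :=
  (ρ x).card_fixedPoints_eq_of_intertwining (σ x) hA (h x)
end

section
/- The number of orbits of G on Ω under the action ρ equals the number of orbits of G on Ω under the action σ. -/
open Classical

section BrauerAux

variable {Ω : Type*} [Fintype Ω] [DecidableEq Ω]
  {K : Type*} [Field K] [CharZero K]
  {G : Type*} [Group G]

/-- The orbit equivalence relation for an action `τ : G →* Equiv.Perm Ω`. -/
def brauerOrbSetoid (τ : G →* Equiv.Perm Ω) : Setoid Ω where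
  r i j := ∃ x : G, τ x i = j
  iseqv := by
    refine ⟨fun i => ⟨1, by simp⟩, ?_, ?_⟩
    · rintro i j ⟨x, hx⟩
      exact ⟨x⁻¹, by rw [← hx, ← Equiv.Perm.mul_apply, ← map_mul]; simp⟩
    · rintro i j k ⟨x, hx⟩ ⟨y, hy⟩
      exact ⟨y * x, by rw [map_mul, Equiv.Perm.mul_apply, hx, hy]⟩

lemma brauer_mk_apply (τ : G →* Equiv.Perm Ω) (x : G) (j : Ω) :
    (Quotient.mk (brauerOrbSetoid τ) (τ x j)) = Quotient.mk (brauerOrbSetoid τ) j :=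
  Quot.sound ((brauerOrbSetoid τ).iseqv.symm (⟨x, rfl⟩ : (brauerOrbSetoid τ).r j (τ x j)))

lemma brauer_card_orbit_set (τ : G →* Equiv.Perm Ω) :
    Nat.card {s : Set Ω | ∃ i : Ω, s = {j : Ω | ∃ x : G, τ x i = j}}
      = Nat.card (Quotient (brauerOrbSetoid τ)) := by
  set f : Quotient (brauerOrbSetoid τ) → Set Ω :=
    Quotient.lift (fun i => {j : Ω | ∃ x : G, τ x i = j}) (by
      rintro a b ⟨x, hx⟩
      ext k
      constructor
      · rintro ⟨y, hy⟩
        exact ⟨y * x⁻¹, by rw [map_mul, Equiv.Perm.mul_apply, ← hx,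
          ← Equiv.Perm.mul_apply, ← map_mul]; simpa using hy⟩
      · rintro ⟨y, hy⟩
        exact ⟨y * x, by rw [map_mul, Equiv.Perm.mul_apply, hx, hy]⟩) with hf
  have hinj : Function.Injective f := by
    intro a b
    induction a using Quotient.ind with | _ i =>
    induction b using Quotient.ind with | _ j =>
    intro hab
    have hj : j ∈ f (Quotient.mk _ j) := ⟨1, by simp⟩
    rw [← hab] at hj
    exact Quotient.sound hj
  have hrange : Set.range f = {s : Set Ω | ∃ i : Ω, s = {j : Ω | ∃ x : G, τ x i = j}} := by
    ext s
    constructor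
    · rintro ⟨q, rfl⟩
      induction q using Quotient.ind with | _ i =>
      exact ⟨i, rfl⟩
    · rintro ⟨i, rfl⟩
      exact ⟨Quotient.mk _ i, rfl⟩
  rw [← hrange, Nat.card_range_of_injective hinj]

lemma brauer_card_le (ρ σ : G →* Equiv.Perm Ω) (A : Matrix Ω Ω K)
    (hA : Function.Injective A.mulVec)
    (h : ∀ (x : G) (i j : Ω), A (ρ x i) (σ x j) = A i j) :
    Nat.card (Quotient (brauerOrbSetoid σ)) ≤ Nat.card (Quotient (brauerOrbSetoid ρ)) := by
  haveI : Fintype (Quotient (brauerOrbSetoid σ)) := Fintype.ofFinite _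
  haveI : Fintype (Quotient (brauerOrbSetoid ρ)) := Fintype.ofFinite _
  -- the invariance of `A *ᵥ (w ∘ mk)` under ρ
  have key : ∀ (w : Quotient (brauerOrbSetoid σ) → K) (x : G) (i : Ω),
      (A.mulVec fun j => w (Quotient.mk _ j)) (ρ x i)
        = (A.mulVec fun j => w (Quotient.mk _ j)) i := by
    intro w x i
    simp only [Matrix.mulVec, dotProduct]
    rw [← Equiv.sum_comp (σ x) (fun j => A (ρ x i) j * w (Quotient.mk _ j))]
    refine Finset.sum_congr rfl fun j _ => ?_
    rw [h, brauer_mk_apply]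
  set M : (Quotient (brauerOrbSetoid σ) → K) →ₗ[K] (Quotient (brauerOrbSetoid ρ) → K) :=
    { toFun := fun w => Quotient.lift (fun i => (A.mulVec fun j => w (Quotient.mk _ j)) i)
        (by rintro a b ⟨x, hx⟩; rw [← hx]; exact (key w x a).symm)
      map_add' := by
        intro w₁ w₂
        funext q
        induction q using Quotient.ind with | _ i =>
        show (A.mulVec fun j => (w₁ + w₂) (Quotient.mk _ j)) i
            = (A.mulVec fun j => w₁ (Quotient.mk _ j)) i
              + (A.mulVec fun j => w₂ (Quotient.mk _ j)) i
        have : (fun j => (w₁ + w₂) (Quotient.mk (brauerOrbSetoid σ) j))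
            = (fun j => w₁ (Quotient.mk _ j)) + (fun j => w₂ (Quotient.mk _ j)) := rfl
        rw [this, Matrix.mulVec_add]; rfl
      map_smul' := by
        intro c w
        funext q
        induction q using Quotient.ind with | _ i =>
        show (A.mulVec fun j => (c • w) (Quotient.mk _ j)) i
            = c • (A.mulVec fun j => w (Quotient.mk _ j)) i
        have : (fun j => (c • w) (Quotient.mk (brauerOrbSetoid σ) j))
            = c • (fun j => w (Quotient.mk _ j)) := rfl
        rw [this, Matrix.mulVec_smul]; rfl } with hM
  have hMinj : Function.Injective M := by
    rw [injective_iff_map_eq_zero]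
    intro w hw
    have hu : (A.mulVec fun j => w (Quotient.mk _ j)) = 0 := by
      funext i
      have := congrFun hw (Quotient.mk _ i)
      simpa [hM] using this
    have h0 : (fun j => w (Quotient.mk (brauerOrbSetoid σ) j)) = (0 : Ω → K) := by
      apply hA
      rw [hu, Matrix.mulVec_zero]
    funext q
    induction q using Quotient.ind with | _ i =>
    exact congrFun h0 i
  calc Nat.card (Quotient (brauerOrbSetoid σ))
      = Module.finrank K (Quotient (brauerOrbSetoid σ) → K) := by
        rw [Module.finrank_pi, Nat.card_eq_fintype_card]
    _ ≤ Module.finrank K (Quotient (brauerOrbSetoid ρ) → K) :=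
        LinearMap.finrank_le_finrank_of_injective hMinj
    _ = Nat.card (Quotient (brauerOrbSetoid ρ)) := by
        rw [Module.finrank_pi, Nat.card_eq_fintype_card]

end BrauerAux

/-- **Brauer Permutation Lemma (orbit count).**
Let `Ω` be a finite set, `K` a field of characteristic zero, `G` a group, and
`ρ, σ : G → Sym(Ω)` two actions of `G` on `Ω`.  Suppose `A` is an invertible
`Ω × Ω` matrix over `K` with `A (ρ x i) (σ x j) = A i j` for all `x, i, j`.
Then the number of `G`-orbits on `Ω` under `ρ` equals the number of `G`-orbits
on `Ω` under `σ`. -/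
theorem stmt1 {Ω : Type*} [Fintype Ω] [DecidableEq Ω]
    {K : Type*} [Field K] [CharZero K]
    {G : Type*} [Group G] (ρ σ : G →* Equiv.Perm Ω)
    (A : Matrix Ω Ω K) (hA : IsUnit A)
    (h : ∀ (x : G) (i j : Ω), A (ρ x i) (σ x j) = A i j) :
    Nat.card {s : Set Ω | ∃ i : Ω, s = {j : Ω | ∃ x : G, ρ x i = j}}
      = Nat.card {s : Set Ω | ∃ i : Ω, s = {j : Ω | ∃ x : G, σ x i = j}} := by
  have hdet : IsUnit A.det := (Matrix.isUnit_iff_isUnit_det A).mp hA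
  have hdetT : IsUnit A.transpose.det := by rwa [Matrix.det_transpose]
  haveI := hdet.invertible
  haveI := hdetT.invertible
  haveI := A.invertibleOfDetInvertible
  haveI := A.transpose.invertibleOfDetInvertible
  have hAinj : Function.Injective A.mulVec := Matrix.mulVec_injective_of_invertible A
  have hATinj : Function.Injective A.transpose.mulVec :=
    Matrix.mulVec_injective_of_invertible A.transpose
  rw [brauer_card_orbit_set, brauer_card_orbit_set]
  refine le_antisymm ?_ ?_
  · exact brauer_card_le σ ρ A.transpose hATinj
      (fun x i j => by simp only [Matrix.transpose_apply]; exact h x j i)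
  · exact brauer_card_le ρ σ A hAinj h
end

section
/- The number of A-orbits on the set Irr(G) of irreducible complex characters of G equals the number of A-orbits on the set Cl(G) of conjugacy classes of G. -/
/-!
For `σ ∈ Aut(G)`, the linear map `F ↦ F ∘ σ⁻¹` on functions on the conjugacy classes permutes two
bases of that space: the indicator functions of the classes and the irreducible characters. Its
trace therefore counts both the `σ`-fixed classes and the `σ`-fixed irreducible characters
(Brauer's permutation lemma), and Burnside's lemma for the finite image of `A` in `Aut(G)` turns
equal fixed-point counts into equal orbit counts.

The irreducible characters are linearly independent by orthogonality, and they span because a class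
function `f` orthogonal to all of them vanishes: the central element `∑ f(g) g` of `k[G]` acts on
every simple left ideal by a scalar (Schur), that scalar is zero since its trace is `⟨f, χ⟩ = 0`,
and an element killing every simple left ideal of the semisimple ring `k[G]` is zero.
-/

open CategoryTheory MulAction
open scoped MonoidAlgebra Pointwise

universe u

namespace MulAction

theorem card_orbitRel_quotient_eq_of_card_fixedBy_eq {H X Y : Type*} [Group H] [Finite H]
    [MulAction H X] [MulAction H Y] [Finite X] [Finite Y]
    (h : ∀ g : H, Nat.card (fixedBy X g) = Nat.card (fixedBy Y g)) :
    Nat.card (orbitRel.Quotient H X) = Nat.card (orbitRel.Quotient H Y) := by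
  classical
  have := Fintype.ofFinite H
  have := Fintype.ofFinite X
  have := Fintype.ofFinite Y
  have hX := sum_card_fixedBy_eq_card_orbits_mul_card_group H X
  have hY := sum_card_fixedBy_eq_card_orbits_mul_card_group H Y
  simp only [← Nat.card_eq_fintype_card, h] at hX hY
  exact Nat.eq_of_mul_eq_mul_right Nat.card_pos (hX.symm.trans hY)

theorem card_range_orbit_eq_card_orbitRel_quotient {H X Z : Type*} [Group H] [MulAction H X]
    [MulAction H Z] (f : X →[H] Z) (hf : Function.Injective f) :
    Nat.card (Set.range fun x => orbit H (f x)) = Nat.card (orbitRel.Quotient H X) := by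
  have hker : Setoid.ker (fun x => orbit H (f x)) = orbitRel H X := by
    ext x y
    simp only [Setoid.ker_def, orbit_eq_iff, orbitRel_apply, mem_orbit_iff, ← map_smul, hf.eq_iff]
  rw [← Nat.card_congr (Setoid.quotientKerEquivRange _), hker]

end MulAction

theorem LinearMap.trace_eq_card_fixedPoints {R M ι : Type*} [CommRing R] [AddCommGroup M]
    [Module R M] [Finite ι] (b : Module.Basis ι R M) (π : ι → ι) (f : M →ₗ[R] M)
    (hf : ∀ i, f (b i) = b (π i)) :
    trace R M f = Nat.card (Function.fixedPoints π) := by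
  classical
  have := Fintype.ofFinite ι
  rw [trace_eq_matrix_trace R b, Matrix.trace]
  simp only [Matrix.diag, toMatrix_apply, hf, b.repr_self, Finsupp.single_apply]
  rw [Finset.sum_boole, ← Fintype.card_subtype, ← Nat.card_eq_fintype_card]
  rfl

theorem IsSemisimpleRing.eq_zero_of_forall_simple_smul_eq_zero {R : Type*} [Ring R]
    [IsSemisimpleRing R] {r : R} (h : ∀ S : Submodule R R, IsSimpleModule R S → ∀ s : S, r • s = 0) :
    r = 0 := by
  have hr : r ∈ (⊤ : Submodule R R).annihilator := by
    rw [← IsSemisimpleModule.sSup_simples_eq_top, sSup_eq_iSup', Submodule.annihilator_iSup,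
      Ideal.mem_iInf]
    exact fun S => Module.mem_annihilator.mpr (h S S.2)
  simpa using Submodule.mem_annihilator.mp hr 1 trivial

theorem MonoidAlgebra.sum_single_mem_center {k G : Type*} [Field k] [Group G] [Fintype G]
    {f : G → k} (hf : ∀ g h : G, f (h * g * h⁻¹) = f g) :
    ∑ g, MonoidAlgebra.single g (f g) ∈ Submonoid.center k[G] := by
  rw [Submonoid.mem_center_iff]
  intro y
  induction y using MonoidAlgebra.induction_linear with
  | zero => simp
  | add a b ha hb => rw [add_mul, mul_add, ha, hb]
  | single h c =>
    simp only [Finset.mul_sum, Finset.sum_mul, MonoidAlgebra.single_mul_single]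
    refine Fintype.sum_equiv (MulAut.conj h).toEquiv _ _ fun g => ?_
    simp [hf, mul_comm c]

namespace Representation

variable {k G V : Type*} [Field k] [Monoid G] [AddCommGroup V] [Module k V]

theorem trace_asAlgebraHom_sum_single [Fintype G]
    (ρ : Representation k G V) (f : G → k) :
    LinearMap.trace k V (ρ.asAlgebraHom (∑ g, MonoidAlgebra.single g (f g))) =
      ∑ g, f g * ρ.character g := by
  simp [map_sum, asAlgebraHom_single, character]

theorem asAlgebraHom_eq_zero_of_trace_eq_zero [IsAlgClosed k] [CharZero k] [FiniteDimensional k V]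
    (ρ : Representation k G V) [ρ.IsIrreducible] {z : k[G]} (hz : z ∈ Submonoid.center k[G])
    (htr : LinearMap.trace k V (ρ.asAlgebraHom z) = 0) : ρ.asAlgebraHom z = 0 := by
  obtain ⟨c, hc⟩ := IsIrreducible.algebraMap_intertwiningMap_bijective_of_isAlgClosed.2
    (IntertwiningMap.centralAlgebraMul ρ hz)
  have hzc : ρ.asAlgebraHom z = c • LinearMap.id := (congrArg IntertwiningMap.toLinearMap hc).symm
  have : Nontrivial V := IsSimpleModule.nontrivial k[G] ρ.asModule
  rw [hzc, map_smul, LinearMap.trace_id, smul_eq_mul, mul_eq_zero] at htr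
  rw [hzc, htr.resolve_right (Nat.cast_ne_zero.mpr Module.finrank_pos.ne'), zero_smul]

variable {M : Type*} [AddCommGroup M] [Module k M] [Module k[G] M] [IsScalarTower k k[G] M]

theorem asAlgebraHom_ofModule'_apply (r : k[G]) (m : M) :
    (ofModule' (k := k) (G := G) M).asAlgebraHom r m = r • m := by
  simp [asAlgebraHom_def, ofModule']

variable (k G M) in
theorem isIrreducible_ofModule' [IsSimpleModule k[G] M] :
    (ofModule' (k := k) (G := G) M).IsIrreducible := by
  let e : (ofModule' (k := k) (G := G) M).asModule ≃ₗ[k[G]] M :=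
    { (ofModule' M).asModuleEquiv with
      map_smul' := fun r m => by simp [asModuleEquiv_map_smul, asAlgebraHom_ofModule'_apply] }
  rw [irreducible_iff_isSimpleModule_asModule]
  exact IsSimpleModule.congr e

end Representation

namespace ConjClasses

variable {G : Type*} [Group G]

instance : MulAction (MulAut G) (ConjClasses G) where
  smul σ := ConjClasses.map σ.toMonoidHom
  one_smul := forall_isConj.2 fun _ => rfl
  mul_smul _ _ := forall_isConj.2 fun _ => rfl

theorem carrier_injective : Function.Injective (carrier : ConjClasses G → Set G) := by
  intro c d h
  obtain ⟨g, rfl⟩ := mk_surjective c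
  exact mem_carrier_iff_mk_eq.mp (h ▸ mem_carrier_mk)

theorem carrier_smul (σ : MulAut G) (c : ConjClasses G) : carrier (σ • c) = σ • carrier c := by
  ext g
  rw [Set.mem_smul_set_iff_inv_smul_mem, mem_carrier_iff_mk_eq, mem_carrier_iff_mk_eq,
    show ConjClasses.mk (σ⁻¹ • g) = σ⁻¹ • ConjClasses.mk g from rfl, inv_smul_eq_iff]

end ConjClasses

def characterPairing (k G : Type*) [Field k] [Group G] [Fintype G] :
    (G → k) →ₗ[k] (G → k) →ₗ[k] k :=
  LinearMap.mk₂ k (fun f f' => ∑ g, f g * f' g⁻¹)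
    (fun _ _ _ => by simp [add_mul, Finset.sum_add_distrib])
    (fun _ _ _ => by simp [Finset.mul_sum, mul_assoc])
    (fun _ _ _ => by simp [mul_add, Finset.sum_add_distrib])
    (fun _ _ _ => by simp [Finset.mul_sum, mul_left_comm])

def irreducibleCharacters (k G : Type u) [Field k] [Monoid G] : Set (G → k) :=
  {χ | ∃ V : FDRep k G, Simple V ∧ χ = V.character}

theorem irreducibleCharacters.conj {k G : Type u} [Field k] [Group G] {χ : G → k}
    (hχ : χ ∈ irreducibleCharacters k G) (g h : G) : χ (h * g * h⁻¹) = χ g := by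
  obtain ⟨V, -, rfl⟩ := hχ
  exact FDRep.char_conj V g h

section Characters

variable {k G : Type u} [Field k] [IsAlgClosed k] [CharZero k] [Group G] [Fintype G]

theorem Representation.character_mem_irreducibleCharacters {V : Type u} [AddCommGroup V]
    [Module k V] [FiniteDimensional k V] (ρ : Representation k G V) [ρ.IsIrreducible] :
    ρ.character ∈ irreducibleCharacters k G := by
  have := invertibleOfNonzero (NeZero.ne (Nat.card G : k))
  refine ⟨FDRep.of ρ, (FDRep.simple_iff_char_is_norm_one _).mpr ?_, rfl⟩
  have h := ρ.char_orthonormal ρ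
  rw [if_pos ⟨Representation.Equiv.refl ρ⟩, inv_mul_eq_one₀ (NeZero.ne _)] at h
  exact h.symm

namespace irreducibleCharacters

variable {χ ψ : G → k}

theorem sum_mul_inv_self (hχ : χ ∈ irreducibleCharacters k G) :
    ∑ g, χ g * χ g⁻¹ = Nat.card G := by
  obtain ⟨V, hV, rfl⟩ := hχ
  exact (FDRep.simple_iff_char_is_norm_one V).mp hV

theorem sum_mul_inv_eq_zero (hχ : χ ∈ irreducibleCharacters k G)
    (hψ : ψ ∈ irreducibleCharacters k G) (hne : χ ≠ ψ) : ∑ g, χ g * ψ g⁻¹ = 0 := by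
  obtain ⟨V, hV, rfl⟩ := hχ
  obtain ⟨W, hW, rfl⟩ := hψ
  have := invertibleOfNonzero (NeZero.ne (Nat.card G : k))
  classical
  have h := FDRep.char_orthonormal V W
  rw [if_neg fun ⟨i⟩ => hne (FDRep.char_iso i)] at h
  simpa [NeZero.ne] using h

theorem comp_inv_mem (hχ : χ ∈ irreducibleCharacters k G) (σ : MulAut G) :
    (fun g => χ (σ⁻¹ g)) ∈ irreducibleCharacters k G := by
  obtain ⟨V, hV, rfl⟩ := id hχ
  refine ⟨FDRep.of (V.ρ.comp (σ⁻¹ : MulAut G).toMonoidHom),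
    (FDRep.simple_iff_char_is_norm_one _).mpr ?_, rfl⟩
  rw [← sum_mul_inv_self hχ]
  exact Fintype.sum_equiv (σ⁻¹ : MulAut G).toEquiv _ _ fun g => by simp [FDRep.character]

variable (k G) in
theorem linearIndependent :
    LinearIndependent k (Subtype.val : irreducibleCharacters k G → G → k) := by
  refine LinearMap.linearIndependent_of_isOrthoᵢ (B := characterPairing k G) ?_ fun χ => ?_
  · exact fun χ ψ hne => sum_mul_inv_eq_zero χ.2 ψ.2 (Subtype.val_injective.ne hne)
  · simp only [characterPairing, LinearMap.mk₂_apply, sum_mul_inv_self χ.2]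
    exact NeZero.ne _

theorem eq_zero_of_forall_sum_mul_eq_zero {f : G → k} (hf : ∀ g h : G, f (h * g * h⁻¹) = f g)
    (horth : ∀ χ ∈ irreducibleCharacters k G, ∑ g, f g * χ g = 0) : f = 0 := by
  have hz : ∑ g, MonoidAlgebra.single g (f g) = 0 := by
    refine IsSemisimpleRing.eq_zero_of_forall_simple_smul_eq_zero fun S hS s => ?_
    have := Representation.isIrreducible_ofModule' k G S
    have h0 := (Representation.ofModule' S).asAlgebraHom_eq_zero_of_trace_eq_zero
      (MonoidAlgebra.sum_single_mem_center hf) (by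
        rw [Representation.trace_asAlgebraHom_sum_single]
        exact horth _ (Representation.character_mem_irreducibleCharacters _))
    have hs := LinearMap.congr_fun h0 s
    rwa [Representation.asAlgebraHom_ofModule'_apply] at hs
  funext g
  classical
  simpa [Finsupp.single_apply] using congrArg (fun x => x.coeff g) hz

instance : MulAction (MulAut G) (irreducibleCharacters k G) where
  smul σ χ := ⟨fun g => χ.1 (σ⁻¹ g), comp_inv_mem χ.2 σ⟩
  one_smul _ := rfl
  mul_smul _ _ _ := rfl

noncomputable instance : Fintype (irreducibleCharacters k G) :=
  (linearIndependent k G).setFinite.fintype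

def classFun (χ : irreducibleCharacters k G) : ConjClasses G → k :=
  Quotient.lift χ.1 fun _ _ hab => by
    obtain ⟨c, rfl⟩ := isConj_iff.mp hab
    exact (conj χ.2 _ c).symm

theorem linearIndependent_classFun : LinearIndependent k (classFun (k := k) (G := G)) :=
  .of_comp (LinearMap.funLeft k k ConjClasses.mk) (linearIndependent k G)

theorem card_eq_card_conjClasses : Nat.card (irreducibleCharacters k G) = Nat.card (ConjClasses G) := by
  classical
  have := Fintype.ofFinite (ConjClasses G)
  let pair : (ConjClasses G → k) →ₗ[k] (irreducibleCharacters k G → k) :=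
    { toFun := fun F χ => ∑ g, F (ConjClasses.mk g) * (χ : G → k) g
      map_add' := fun _ _ => by ext; simp [add_mul, Finset.sum_add_distrib]
      map_smul' := fun _ _ => by ext; simp [Finset.mul_sum, mul_assoc] }
  have hpair : Function.Injective pair := by
    rw [← LinearMap.ker_eq_bot, LinearMap.ker_eq_bot']
    intro F hF
    have hmk : (fun g => F (ConjClasses.mk g)) = 0 :=
      eq_zero_of_forall_sum_mul_eq_zero
        (fun g h => congrArg F (ConjClasses.mk_eq_mk_iff_isConj.mpr (isConj_iff.mpr ⟨h, rfl⟩).symm))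
        fun χ hχ => congrFun hF ⟨χ, hχ⟩
    funext c
    obtain ⟨g, rfl⟩ := ConjClasses.mk_surjective c
    exact congrFun hmk g
  simp only [Nat.card_eq_fintype_card]
  refine le_antisymm ?_ ?_
  · simpa using (linearIndependent_classFun (k := k) (G := G)).fintype_card_le_finrank
  · simpa using LinearMap.finrank_le_finrank_of_injective hpair

noncomputable def classFunBasis :
    Module.Basis (irreducibleCharacters k G) k (ConjClasses G → k) :=
  basisOfLinearIndependentOfCardEqFinrank' classFun linearIndependent_classFun <| by
    classical
    rw [Module.finrank_fintype_fun_eq_card, Fintype.card_eq_nat_card, card_eq_card_conjClasses,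
      Nat.card_eq_fintype_card]

theorem card_fixedBy_eq (σ : MulAut G) :
    Nat.card (fixedBy (irreducibleCharacters k G) σ) = Nat.card (fixedBy (ConjClasses G) σ) := by
  classical
  let L := LinearMap.funLeft k k (σ⁻¹ • · : ConjClasses G → ConjClasses G)
  have hirr := L.trace_eq_card_fixedPoints classFunBasis (σ • ·) fun χ => by
    ext c
    obtain ⟨g, rfl⟩ := ConjClasses.mk_surjective c
    simp only [classFunBasis, coe_basisOfLinearIndependentOfCardEqFinrank', LinearMap.funLeft_apply,
      L]
    rfl
  have hcl := L.trace_eq_card_fixedPoints (Pi.basisFun k _) (σ • ·) fun c => by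
    ext d
    simp [L, Pi.single_apply, inv_smul_eq_iff]
  exact_mod_cast hirr.symm.trans hcl

theorem card_orbitRel_quotient_eq (H : Subgroup (MulAut G)) :
    Nat.card (orbitRel.Quotient H (irreducibleCharacters k G)) =
      Nat.card (orbitRel.Quotient H (ConjClasses G)) :=
  card_orbitRel_quotient_eq_of_card_fixedBy_eq fun σ => card_fixedBy_eq (σ : MulAut G)

end irreducibleCharacters

end Characters

section OrbitSets

variable {G : Type u} [Group G] {A : Type*} [Group A] (φ : A →* MulAut G)

theorem card_setOf_orbits_irreducibleCharacters {k : Type u} [Field k] [IsAlgClosed k]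
    [CharZero k] [Fintype G] :
    Nat.card {O : Set (G → k) | ∃ χ : G → k,
        (∃ V : FDRep k G, Simple V ∧ χ = V.character) ∧
        O = {ψ : G → k | ∃ a : A, ψ = fun g : G => χ ((φ a)⁻¹ g)}} =
      Nat.card (orbitRel.Quotient φ.range (irreducibleCharacters k G)) := by
  let : MulAction (MulAut G) (G → k) := arrowAction
  have horbit (χ : G → k) :
      orbit φ.range χ = {ψ : G → k | ∃ a : A, ψ = fun g : G => χ ((φ a)⁻¹ g)} := by
    ext ψ
    constructor
    · rintro ⟨⟨_, a, rfl⟩, rfl⟩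
      exact ⟨a, rfl⟩
    · rintro ⟨a, rfl⟩
      exact ⟨⟨φ a, a, rfl⟩, rfl⟩
  have hset : {O : Set (G → k) | ∃ χ : G → k,
      (∃ V : FDRep k G, Simple V ∧ χ = V.character) ∧
      O = {ψ : G → k | ∃ a : A, ψ = fun g : G => χ ((φ a)⁻¹ g)}} =
      Set.range fun χ : irreducibleCharacters k G => orbit φ.range (χ : G → k) := by
    ext O
    simp only [← horbit]
    constructor
    · rintro ⟨χ, hχ, rfl⟩
      exact ⟨⟨χ, hχ⟩, rfl⟩
    · rintro ⟨χ, rfl⟩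
      exact ⟨χ, χ.2, rfl⟩
  rw [hset]
  exact card_range_orbit_eq_card_orbitRel_quotient ⟨Subtype.val, fun _ _ => rfl⟩
    Subtype.val_injective

theorem card_setOf_orbits_conjClasses :
    Nat.card {P : Set (Set G) | ∃ C : Set G,
        (∃ g : G, C = {h : G | IsConj g h}) ∧
        P = {D : Set G | ∃ a : A, D = (φ a) '' C}} =
      Nat.card (orbitRel.Quotient φ.range (ConjClasses G)) := by
  have horbit (C : Set G) : orbit φ.range C = {D : Set G | ∃ a : A, D = (φ a) '' C} := by
    ext D
    constructor
    · rintro ⟨⟨_, a, rfl⟩, rfl⟩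
      exact ⟨a, rfl⟩
    · rintro ⟨a, rfl⟩
      exact ⟨⟨φ a, a, rfl⟩, rfl⟩
  have hset : {P : Set (Set G) | ∃ C : Set G,
      (∃ g : G, C = {h : G | IsConj g h}) ∧
      P = {D : Set G | ∃ a : A, D = (φ a) '' C}} =
      Set.range fun c : ConjClasses G => orbit φ.range c.carrier := by
    ext P
    simp only [← horbit]
    constructor
    · rintro ⟨C, ⟨g, rfl⟩, rfl⟩
      exact ⟨ConjClasses.mk g, rfl⟩
    · rintro ⟨c, rfl⟩
      obtain ⟨g, rfl⟩ := ConjClasses.mk_surjective c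
      exact ⟨_, ⟨g, rfl⟩, rfl⟩
  rw [hset]
  exact card_range_orbit_eq_card_orbitRel_quotient (H := φ.range)
    ⟨ConjClasses.carrier, fun σ c => ConjClasses.carrier_smul (σ : MulAut G) c⟩
    ConjClasses.carrier_injective

end OrbitSets

/-- **Brauer Permutation Lemma applied to character theory (orbit count).**
Let `G` be a finite group and let a group `A` act on `G` by automorphisms via
`φ : A →* MulAut G`.  `A` acts on the irreducible complex characters of `G` by
`(a • χ) g = χ ((φ a)⁻¹ g)` and on conjugacy classes by `a • C = (φ a) '' C`.
Then the number of `A`-orbits on the set of irreducible complex characters of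
`G` equals the number of `A`-orbits on the set of conjugacy classes of `G`. -/
theorem stmt4 {G : Type} [Group G] [Fintype G] {A : Type*} [Group A]
    (φ : A →* MulAut G) :
    Nat.card {O : Set (G → ℂ) | ∃ χ : G → ℂ,
        (∃ V : FDRep ℂ G, CategoryTheory.Simple V ∧ χ = V.character) ∧
        O = {ψ : G → ℂ | ∃ a : A, ψ = fun g : G => χ ((φ a)⁻¹ g)}}
      = Nat.card {P : Set (Set G) | ∃ C : Set G,
        (∃ g : G, C = {h : G | IsConj g h}) ∧
        P = {D : Set G | ∃ a : A, D = (φ a) '' C}} := by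
  rw [card_setOf_orbits_irreducibleCharacters, card_setOf_orbits_conjClasses]
  exact irreducibleCharacters.card_orbitRel_quotient_eq φ.range
end

section
/- The number of A-orbits on S equals the number of A-orbits on T. -/
/-!
The matrix is `A`-invariant, `M (a • χ) (a • C) = M χ C`, because `φ a` maps a representative
of `C` to one of `a • C`. Hence the linear isomorphism `M.mulVec` from functions on `T` to
functions on `S` maps the `A`-invariant functions onto the `A`-invariant functions, and on a
finite `A`-set these form a space whose dimension is the number of orbits. Unlike the
permutation-character argument via Burnside's lemma, this needs no finiteness of `A`.
-/

open MulAction Module Matrix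

section InvariantFunctions

variable (K A X : Type*) [Field K] [Group A] [MulAction A X]

def invariantFunctions : Submodule K (X → K) where
  carrier := {f | ∀ (a : A) (x : X), f (a • x) = f x}
  add_mem' hf hg a x := by simp [hf a x, hg a x]
  zero_mem' _ _ := rfl
  smul_mem' c f hf a x := by simp [hf a x]

variable {K A X} in
theorem mem_invariantFunctions_iff {f : X → K} :
    f ∈ invariantFunctions K A X ↔ ∀ a : A, (fun x => f (a • x)) = f := by
  simp only [funext_iff]; rfl

def invariantFunctionsEquiv :
    invariantFunctions K A X ≃ₗ[K] (orbitRel.Quotient A X → K) where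
  toFun f := Quotient.lift f.1 fun _ y ⟨a, hay⟩ => hay ▸ f.2 a y
  invFun g := ⟨g ∘ Quotient.mk _, fun _ _ => congrArg g (orbitRel.Quotient.quotient_smul_eq)⟩
  left_inv _ := rfl
  right_inv _ := funext (Quotient.ind fun _ => rfl)
  map_add' _ _ := funext (Quotient.ind fun _ => rfl)
  map_smul' _ _ := funext (Quotient.ind fun _ => rfl)

theorem finrank_invariantFunctions [Finite X] :
    finrank K (invariantFunctions K A X) = Nat.card (orbitRel.Quotient A X) := by
  have := Fintype.ofFinite (orbitRel.Quotient A X)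
  rw [(invariantFunctionsEquiv K A X).finrank_eq, finrank_fintype_fun_eq_card,
    Nat.card_eq_fintype_card]

end InvariantFunctions

section InvariantMatrix

variable {K A X Y : Type*} [Field K] [Group A] [MulAction A X] [MulAction A Y] [Fintype X]
  {M : Matrix Y X K}

theorem Matrix.mulVec_comp_smul (hM : ∀ (a : A) y x, M (a • y) (a • x) = M y x) (a : A)
    (v : X → K) : M *ᵥ (fun x => v (a • x)) = fun y => (M *ᵥ v) (a • y) := by
  funext y
  simp only [Matrix.mulVec, dotProduct]
  rw [← Equiv.sum_comp (toPerm a) (fun x => M (a • y) x * v x)]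
  simp only [toPerm_apply, hM]

theorem Matrix.mulVec_mem_invariantFunctions_iff (hM : ∀ (a : A) y x, M (a • y) (a • x) = M y x)
    (hinj : Function.Injective M.mulVec) {v : X → K} :
    M *ᵥ v ∈ invariantFunctions K A Y ↔ v ∈ invariantFunctions K A X := by
  simp only [mem_invariantFunctions_iff, ← Matrix.mulVec_comp_smul hM, hinj.eq_iff]

theorem Matrix.card_orbitRel_quotient_eq_of_bijective_mulVec [Finite Y]
    (hM : ∀ (a : A) y x, M (a • y) (a • x) = M y x) (hbij : Function.Bijective M.mulVec) :
    Nat.card (orbitRel.Quotient A Y) = Nat.card (orbitRel.Quotient A X) := by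
  let e : (X → K) ≃ₗ[K] (Y → K) := .ofBijective M.mulVecLin hbij
  have hmap : (invariantFunctions K A X).map e.toLinearMap = invariantFunctions K A Y := by
    ext w
    obtain ⟨v, rfl⟩ := hbij.2 w
    change e v ∈ _ ↔ _
    rw [Submodule.mem_map_equiv, e.symm_apply_apply]
    exact (Matrix.mulVec_mem_invariantFunctions_iff hM hbij.1).symm
  rw [← finrank_invariantFunctions K, ← hmap, e.finrank_map_eq, finrank_invariantFunctions]

end InvariantMatrix

theorem SubMulAction.card_setOf_orbit {A Z : Type*} [Group A] [MulAction A Z]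
    (p : SubMulAction A Z) :
    Nat.card {O : Set Z | ∃ z ∈ p, O = orbit A z} = Nat.card (orbitRel.Quotient A p) := by
  have hrange : {O : Set Z | ∃ z ∈ p, O = orbit A z}
      = Set.range fun q : orbitRel.Quotient A p => Subtype.val '' q.orbit := by
    ext O
    constructor
    · rintro ⟨z, hz, rfl⟩
      exact ⟨⟦⟨z, hz⟩⟧, SubMulAction.val_image_orbit _⟩
    · rintro ⟨q, rfl⟩
      induction q using Quotient.inductionOn with
      | h x => exact ⟨x, x.2, SubMulAction.val_image_orbit x⟩
  rw [hrange]
  exact Nat.card_range_of_injective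
    (Subtype.val_injective.image_injective.comp orbitRel.Quotient.orbit_injective)

theorem stmt6_general {G : Type} [Group G] {A : Type*} [Group A]
    (φ : A →* MulAut G)
    (S : Set (G → ℂ)) (T : Set (Set G)) [Fintype ↥S] [Fintype ↥T]
    (hT : ∀ C ∈ T, ∃ g : G, C = {h : G | IsConj g h})
    (hSinv : ∀ (a : A), ∀ χ ∈ S, (fun g : G => χ ((φ a)⁻¹ g)) ∈ S)
    (hTinv : ∀ (a : A), ∀ C ∈ T, (φ a) '' C ∈ T)
    (M : Matrix ↥S ↥T ℂ)
    (hM : ∀ (χ : ↥S) (C : ↥T) (g : G), g ∈ (C : Set G) → M χ C = (χ : G → ℂ) g)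
    (hMinv : Function.Bijective M.mulVec) :
    Nat.card {O : Set (G → ℂ) | ∃ χ ∈ S,
        O = {ψ : G → ℂ | ∃ a : A, ψ = fun g : G => χ ((φ a)⁻¹ g)}}
      = Nat.card {P : Set (Set G) | ∃ C ∈ T,
        P = {D : Set G | ∃ a : A, D = (φ a) '' C}} := by
  -- Acting through `MulAut G` makes `a • χ` unfold to `fun g => χ ((φ a)⁻¹ g)`, as in the
  -- statement, rather than to `fun g => χ (φ a⁻¹ g)`.
  let : MulAction (MulAut G) (G → ℂ) := arrowAction
  let : MulAction A (G → ℂ) := .compHom _ φ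
  let : MulAction (MulAut G) (Set G) := Set.mulActionSet
  let : MulAction A (Set G) := .compHom _ φ
  let pS : SubMulAction A (G → ℂ) := ⟨S, fun a _ hχ => hSinv a _ hχ⟩
  let pT : SubMulAction A (Set G) := ⟨T, fun a _ hC => hTinv a _ hC⟩
  have hMA : ∀ (a : A) (χ : pS) (C : pT), M (a • χ) (a • C) = M χ C := by
    intro a χ C
    obtain ⟨g, hg⟩ := hT C C.2
    have hgC : g ∈ (C : Set G) := hg ▸ IsConj.refl g
    rw [hM _ _ (φ a g) (Set.mem_image_of_mem _ hgC), hM χ C g hgC]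
    exact congrArg χ.1 ((φ a).symm_apply_apply g)
  have horbitS (χ : G → ℂ) :
      {ψ : G → ℂ | ∃ a : A, ψ = fun g : G => χ ((φ a)⁻¹ g)} = orbit A χ :=
    Set.ext fun _ => exists_congr fun _ => eq_comm
  have horbitT (C : Set G) : {D : Set G | ∃ a : A, D = (φ a) '' C} = orbit A C :=
    Set.ext fun _ => exists_congr fun _ => eq_comm
  simp only [horbitS, horbitT]
  calc _ = Nat.card (orbitRel.Quotient A pS) := pS.card_setOf_orbit
    _ = Nat.card (orbitRel.Quotient A pT) :=
      M.card_orbitRel_quotient_eq_of_bijective_mulVec (X := pT) (Y := pS) hMA hMinv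
    _ = _ := pT.card_setOf_orbit.symm

/-- **Block form of the Brauer Permutation Lemma (orbit count).**
Let `G` be a finite group and let a group `A` act on `G` by automorphisms via
`φ : A →* MulAut G`; `A` acts on irreducible complex characters by
`(a • χ) g = χ ((φ a)⁻¹ g)` and on conjugacy classes by `a • C = (φ a) '' C`.
Let `S` be an `A`-invariant set of irreducible complex characters of `G` and
`T` an `A`-invariant set of conjugacy classes of `G` with `|S| = |T| = m`, and
suppose the `m × m` matrix `(χ(C))_{χ ∈ S, C ∈ T}` (where `χ(C)` is the common
value of `χ` on the class `C`) is invertible.  Then the number of `A`-orbits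
on `S` equals the number of `A`-orbits on `T`. -/
theorem stmt6 {G : Type} [Group G] [Fintype G] {A : Type*} [Group A]
    (φ : A →* MulAut G)
    (S : Set (G → ℂ)) (T : Set (Set G)) [Fintype ↥S] [Fintype ↥T]
    (hS : ∀ χ ∈ S, ∃ V : FDRep ℂ G, CategoryTheory.Simple V ∧ χ = V.character)
    (hT : ∀ C ∈ T, ∃ g : G, C = {h : G | IsConj g h})
    (hSinv : ∀ (a : A), ∀ χ ∈ S, (fun g : G => χ ((φ a)⁻¹ g)) ∈ S)
    (hTinv : ∀ (a : A), ∀ C ∈ T, (φ a) '' C ∈ T)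
    (m : ℕ) (hSm : Nat.card ↥S = m) (hTm : Nat.card ↥T = m)
    (M : Matrix ↥S ↥T ℂ)
    (hM : ∀ (χ : ↥S) (C : ↥T) (g : G), g ∈ (C : Set G) → M χ C = (χ : G → ℂ) g)
    (hMinv : Function.Bijective M.mulVec) :
    Nat.card {O : Set (G → ℂ) | ∃ χ ∈ S,
        O = {ψ : G → ℂ | ∃ a : A, ψ = fun g : G => χ ((φ a)⁻¹ g)}}
      = Nat.card {P : Set (Set G) | ∃ C ∈ T,
        P = {D : Set G | ∃ a : A, D = (φ a) '' C}} :=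
  stmt6_general φ S T hT hSinv hTinv M hM hMinv
end

section
/- There exists a partition Ω = Ω_1 ∪ ⋯ ∪ Ω_r into pairwise disjoint subsets such that for each i = 1, …, r the family (π_i(v_ω))_{ω ∈ Ω_i} is an R-basis of W_i. -/
/-!
Writing each basis vector as `v ω = ∑ i, π i (v ω)` and expanding `1 = det_v v` multilinearly
gives a sum, over all choices `c : Ω → Fin r`, of the determinants of the families
`ω ↦ π (c ω) (v ω)`. Over a local ring a sum of non-units is a non-unit, so one of these
determinants is a unit, i.e. one such family is again a basis of `V`. Each of its vectors lies in
a single summand, so projecting onto `W i` keeps those with `c ω = i` and kills the others;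
hence the vectors with `c ω = i` form a basis of `W i`.
-/

open Module Submodule

section

variable {R V Ω : Type*} [CommRing R] [AddCommGroup V] [Module R V]

theorem Module.Basis.span_fiber_eq_of_mem {ι : Type*} (b : Basis Ω R V) (c : Ω → ι)
    (W : ι → Submodule R V) (π : ι → V →ₗ[R] V) (hb : ∀ ω, b ω ∈ W (c ω))
    (hon : ∀ i, ∀ x ∈ W i, π i x = x) (hoff : ∀ i j, i ≠ j → ∀ x ∈ W j, π i x = 0) (i : ι) :
    span R (Set.range fun ω : c ⁻¹' {i} => b ω) = W i := by
  refine le_antisymm (span_le.2 ?_) fun w hw => ?_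
  · rintro _ ⟨⟨ω, rfl⟩, rfl⟩
    exact hb ω
  have hπb : ∀ ω, π i (b ω) ∈ span R (Set.range fun ω : c ⁻¹' {i} => b ω) := by
    intro ω
    by_cases hω : c ω = i
    · subst hω
      rw [hon _ _ (hb ω)]
      exact subset_span ⟨⟨ω, rfl⟩, rfl⟩
    · rw [hoff i (c ω) (Ne.symm hω) _ (hb ω)]
      exact zero_mem _
  have hw' : w ∈ (span R (Set.range b)).map (π i) := by
    rw [b.span_eq, Submodule.map_top]
    exact ⟨w, hon i w hw⟩
  rw [map_span] at hw'
  refine span_le.2 ?_ hw'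
  rintro _ ⟨_, ⟨ω, rfl⟩, rfl⟩
  exact hπb ω

variable [Fintype Ω] [DecidableEq Ω]

theorem Module.Basis.exists_isUnit_det_of_sum_eq [IsLocalRing R] {ι : Type*} [Fintype ι]
    [DecidableEq ι] (v : Basis Ω R V) (f : Ω → ι → V) (hf : ∀ ω, ∑ i, f ω i = v ω) :
    ∃ c : Ω → ι, IsUnit (v.det fun ω => f ω (c ω)) := by
  have hexpand : ∑ c : Ω → ι, v.det (fun ω => f ω (c ω)) = 1 := by
    rw [← v.det_self, ← funext hf]
    exact ((v.det : V [⋀^Ω]→ₗ[R] R).toMultilinearMap.map_sum f).symm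
  obtain ⟨c, -, hc⟩ := IsLocalRing.exists_of_isUnit_sum (hexpand ▸ isUnit_one)
  exact ⟨c, hc⟩

noncomputable def Module.Basis.ofIsUnitDet (v : Basis Ω R V) {u : Ω → V}
    (hu : IsUnit (v.det u)) : Basis Ω R V :=
  Basis.mk ((v.is_basis_iff_det).2 hu).1 ((v.is_basis_iff_det).2 hu).2.ge

@[simp]
theorem Module.Basis.coe_ofIsUnitDet (v : Basis Ω R V) {u : Ω → V} (hu : IsUnit (v.det u)) :
    ⇑(v.ofIsUnitDet hu) = u :=
  Basis.coe_mk _ _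

end

/-- **Theorem 2.1 (Brauer's basis-partition theorem).**
Let `R` be a commutative local ring, `Ω` a finite set, `V` an `R`-module with
basis `(v_ω)_{ω ∈ Ω}`, and suppose `V = W_1 ⊕ ⋯ ⊕ W_r` is an internal direct
sum of submodules `W i`, with `π i : V → V` the projection onto `W i` along the
other summands.  Then there is a partition `Ω = Ω_1 ∪ ⋯ ∪ Ω_r` into pairwise
disjoint subsets such that for each `i` the family `(π i (v ω))_{ω ∈ Ω_i}` is
an `R`-basis of `W i` (it is linearly independent and spans `W i`). -/
theorem stmt10 {R : Type*} [CommRing R] [IsLocalRing R]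
    {V : Type*} [AddCommGroup V] [Module R V]
    {Ω : Type*} [Fintype Ω] (v : Module.Basis Ω R V)
    {r : ℕ} (W : Fin r → Submodule R V) (π : Fin r → V →ₗ[R] V)
    (hmem : ∀ (i : Fin r) (x : V), π i x ∈ W i)
    (hsum : ∀ x : V, ∑ i, π i x = x)
    (hon : ∀ i : Fin r, ∀ x ∈ W i, π i x = x)
    (hoff : ∀ i j : Fin r, i ≠ j → ∀ x ∈ W j, π i x = 0) :
    ∃ Ωs : Fin r → Set Ω,
      (∀ i j : Fin r, i ≠ j → Disjoint (Ωs i) (Ωs j)) ∧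
      (⋃ i, Ωs i) = Set.univ ∧
      ∀ i : Fin r,
        LinearIndependent R (fun ω : Ωs i => π i (v ω)) ∧
        Submodule.span R (Set.range fun ω : Ωs i => π i (v ω)) = W i := by
  classical
  obtain ⟨c, hc⟩ := v.exists_isUnit_det_of_sum_eq (fun ω i => π i (v ω)) fun ω => hsum (v ω)
  set b := v.ofIsUnitDet hc
  have hfiber : ∀ i, (fun ω : c ⁻¹' {i} => π i (v ω)) = fun ω : c ⁻¹' {i} => b ω := by
    intro i
    funext ⟨ω, hω⟩
    simp only [b, Basis.coe_ofIsUnitDet, Set.mem_singleton_iff.1 hω]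
  refine ⟨fun i => c ⁻¹' {i}, fun i j hij => Disjoint.preimage c (Set.disjoint_singleton.2 hij),
    Set.iUnion_eq_univ_iff.2 fun ω => ⟨c ω, rfl⟩, fun i => ⟨?_, ?_⟩⟩
  · rw [hfiber]
    exact b.linearIndependent.comp _ Subtype.val_injective
  · rw [hfiber]
    exact b.span_fiber_eq_of_mem c W π (fun ω => by simpa [b] using hmem (c ω) (v ω)) hon hoff i
end

section
/- Let (e_i)_{i∈I} be a finite family of pairwise orthogonal central idempotents of the group algebra RG (e_i e_j = 0 for i ≠ j, e_i² = e_i, each e_i central) with ∑_{i∈I} e_i = 1 (for instance, the block idempotents of RG). Then there exists a partition Cl(G) = ⋃_{i∈I} Ω_i of the set of conjugacy classes of G into pairwise disjoint subsets such that for each i the family (e_i·Ĉ)_{C ∈ Ω_i} is an R-basis of the R-submodule e_i·Z(RG) = {e_i z : z ∈ Z(RG)} of the center Z(RG). -/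
/-- The class sum `Ĉ = ∑_{x ∈ C} x` of a conjugacy class `c` of a finite group
`G`, as an element of the group algebra `RG`. -/
noncomputable def classSum (R : Type*) [CommRing R] {G : Type*} [Group G] [Fintype G]
    (c : ConjClasses G) : MonoidAlgebra R G :=
  letI : DecidablePred (· ∈ c.carrier) := Classical.decPred _
  ∑ x ∈ Finset.univ.filter (· ∈ c.carrier), MonoidAlgebra.of R G x

/-! The class sums form an `R`-basis of `Z(RG)`, and `Ĉ = ∑ i, e i * Ĉ`. Expanding the
determinant multilinearly, `1 = det (Ĉ)_C = ∑_f det (e (f C) * Ĉ)_C`, the sum running over all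
maps `f : Cl(G) → I`. Over a local ring some summand must be a unit, so `(e (f C) * Ĉ)_C` is again
a basis of `Z(RG)`, and `Ω_i = f⁻¹' {i}` works: multiplication by `e i` fixes the basis vectors
indexed by `Ω_i` and kills all the others. -/

open Submodule Set

section ClassSum

variable {R : Type*} [CommRing R] {G : Type*} [Group G]

theorem MonoidAlgebra.coeff_eq_of_isConj_of_mem_center {x : MonoidAlgebra R G}
    (hx : x ∈ Subalgebra.center R (MonoidAlgebra R G)) {y z : G} (hyz : IsConj y z) :
    x.coeff y = x.coeff z := by
  obtain ⟨g, rfl⟩ := isConj_iff.mp hyz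
  have hcomm := congrArg (MonoidAlgebra.coeff · (g * y))
    (Subalgebra.mem_center_iff.mp hx (MonoidAlgebra.single g 1))
  simpa [MonoidAlgebra.coeff_single_mul_apply, MonoidAlgebra.coeff_mul_single_apply] using hcomm

variable [Fintype G]

theorem classSum_coeff [DecidableEq (ConjClasses G)] (c : ConjClasses G) (y : G) :
    (classSum R c).coeff y = if ConjClasses.mk y = c then 1 else 0 := by
  classical
  simp only [classSum, MonoidAlgebra.coeff_sum, Finsupp.finsetSum_apply, MonoidAlgebra.of_apply,
    MonoidAlgebra.coeff_single, Finsupp.single_apply, Finset.sum_ite_eq', Finset.mem_filter,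
    Finset.mem_univ, true_and, ConjClasses.mem_carrier_iff_mk_eq]

theorem classSum_mem_center (c : ConjClasses G) :
    classSum R c ∈ Subalgebra.center R (MonoidAlgebra R G) := by
  classical
  rw [Subalgebra.mem_center_iff]
  intro a
  induction a using MonoidAlgebra.induction_on with
  | of g =>
    ext y
    have hconj : IsConj (g⁻¹ * y) (y * g⁻¹) := isConj_iff.mpr ⟨g, by group⟩
    simp [MonoidAlgebra.coeff_single_mul_apply, MonoidAlgebra.coeff_mul_single_apply,
      classSum_coeff, ConjClasses.mk_eq_mk_iff_isConj.mpr hconj]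
  | add f g hf hg => rw [add_mul, mul_add, hf, hg]
  | smul r f hf => rw [smul_mul_assoc, mul_smul_comm, hf]

theorem linearIndependent_classSum :
    LinearIndependent R (classSum R : ConjClasses G → MonoidAlgebra R G) := by
  classical
  refine linearIndependent_iff'.mpr fun s a hsum c hc => ?_
  have hcoeff := congrArg (MonoidAlgebra.coeff · c.out) hsum
  have hout : ConjClasses.mk c.out = c := Quotient.out_eq c
  simpa [MonoidAlgebra.coeff_sum, Finsupp.finsetSum_apply, MonoidAlgebra.coeff_smul_apply,
    classSum_coeff, hout, hc] using hcoeff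

theorem sum_coeff_out_smul_classSum {x : MonoidAlgebra R G}
    (hx : x ∈ Subalgebra.center R (MonoidAlgebra R G)) [Fintype (ConjClasses G)] :
    ∑ c : ConjClasses G, x.coeff c.out • classSum R c = x := by
  classical
  ext y
  simp only [MonoidAlgebra.coeff_sum, Finsupp.finsetSum_apply, MonoidAlgebra.coeff_smul_apply,
    classSum_coeff, smul_eq_mul, mul_ite, mul_one, mul_zero, Finset.sum_ite_eq,
    Finset.mem_univ, if_true]
  exact MonoidAlgebra.coeff_eq_of_isConj_of_mem_center hx
    (ConjClasses.mk_eq_mk_iff_isConj.mp (ConjClasses.mk y).out_eq)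

theorem span_range_classSum :
    span R (range (classSum R : ConjClasses G → MonoidAlgebra R G)) =
      Subalgebra.toSubmodule (Subalgebra.center R (MonoidAlgebra R G)) := by
  classical
  have := Fintype.ofFinite (ConjClasses G)
  apply le_antisymm
  · exact span_le.mpr (range_subset_iff.mpr classSum_mem_center)
  · intro x hx
    rw [← sum_coeff_out_smul_classSum hx]
    exact sum_mem fun c _ => smul_mem _ _ (subset_span (mem_range_self c))

end ClassSum

section LinearAlgebra

variable {R M ι I : Type*} [CommRing R] [AddCommGroup M] [Module R M]

theorem Module.Basis.exists_isUnit_det_of_sum_eq_s12 [IsLocalRing R] [Fintype ι] [DecidableEq ι]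
    [Fintype I] (B : Module.Basis ι R M) (w : I → ι → M) (hw : ∀ c, ∑ i, w i c = B c) :
    ∃ f : ι → I, IsUnit (B.det fun c => w (f c) c) := by
  have hexpand : ∑ f : ι → I, B.det (fun c => w (f c) c) = 1 := by
    rw [← B.det_self, ← funext hw]
    exact (B.det.toMultilinearMap.map_sum fun c i => w i c).symm
  obtain ⟨f, -, hf⟩ := IsLocalRing.exists_of_isUnit_sum (hexpand ▸ isUnit_one)
  exact ⟨f, hf⟩

theorem LinearIndependent.exists_linearIndependent_span_eq_of_sum_eq [IsLocalRing R] [Finite ι]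
    [Fintype I] {v : ι → M} (hv : LinearIndependent R v) (w : I → ι → M)
    (hw : ∀ i c, w i c ∈ span R (range v)) (hsum : ∀ c, ∑ i, w i c = v c) :
    ∃ f : ι → I, LinearIndependent R (fun c => w (f c) c) ∧
      span R (range fun c => w (f c) c) = span R (range v) := by
  classical
  have := Fintype.ofFinite ι
  let N := span R (range v)
  let w' : I → ι → N := fun i c => ⟨w i c, hw i c⟩
  have hsum' : ∀ c, ∑ i, w' i c = Module.Basis.span hv c := fun c => by
    ext
    simp [w', hsum]
  obtain ⟨f, hf⟩ := (Module.Basis.span hv).exists_isUnit_det_of_sum_eq_s12 w' hsum'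
  obtain ⟨hli, hspan⟩ := (Module.Basis.is_basis_iff_det _).mpr hf
  refine ⟨f, hli.map' N.subtype N.ker_subtype, ?_⟩
  calc span R (range fun c => w (f c) c)
      = (span R (range fun c => w' (f c) c)).map N.subtype := by rw [map_span, ← range_comp]; rfl
    _ = N := by rw [hspan, map_subtype_top]

theorem span_range_mul_fiber_eq_map_mulLeft {A : Type*} [Semiring A] [Algebra R A] {e : I → A}
    (hidem : ∀ i, e i * e i = e i) (horth : ∀ i j, i ≠ j → e i * e j = 0)
    (f : ι → I) (v : ι → A) (i : I) :
    span R (range fun c : f ⁻¹' {i} => e i * v c) =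
      (span R (range fun c => e (f c) * v c)).map (LinearMap.mulLeft R (e i)) := by
  rw [map_span, ← range_comp]
  apply le_antisymm
  · refine span_mono ?_
    rintro _ ⟨⟨c, hc : f c = i⟩, rfl⟩
    exact ⟨c, by simp [hc, ← mul_assoc, hidem]⟩
  · refine span_le.mpr ?_
    rintro _ ⟨c, rfl⟩
    by_cases hc : f c = i
    · exact subset_span ⟨⟨c, hc⟩, by simp [hc, ← mul_assoc, hidem]⟩
    · simp [← mul_assoc, horth i (f c) (Ne.symm hc)]

end LinearAlgebra

/-- **Theorem 2.3, first assertion: the block partition of `Cl(G)`.**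
Let `R` be a commutative local ring and `G` a finite group.  Let `(e i)_{i ∈ I}`
be a finite family of pairwise orthogonal central idempotents of the group
algebra `RG` with `∑ i, e i = 1` (for instance, the block idempotents of `RG`).
Then there is a partition `Cl(G) = ⋃_{i ∈ I} Ω_i` of the set of conjugacy
classes of `G` into pairwise disjoint subsets such that for each `i` the family
of products `e i * Ĉ` for `C ∈ Ω_i` is an `R`-basis of the `R`-submodule
`e i • Z(RG)` of the center `Z(RG)`. -/
theorem stmt12 {R : Type*} [CommRing R] [IsLocalRing R]
    {G : Type*} [Group G] [Fintype G]
    {I : Type*} [Fintype I] (e : I → MonoidAlgebra R G)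
    (hcentral : ∀ i, e i ∈ Subalgebra.center R (MonoidAlgebra R G))
    (hidem : ∀ i, e i * e i = e i)
    (horth : ∀ i j, i ≠ j → e i * e j = 0)
    (hsum : ∑ i, e i = 1) :
    ∃ Ωs : I → Set (ConjClasses G),
      (∀ i j, i ≠ j → Disjoint (Ωs i) (Ωs j)) ∧
      (⋃ i, Ωs i) = Set.univ ∧
      ∀ i,
        LinearIndependent R (fun C : Ωs i => e i * classSum R (C : ConjClasses G)) ∧
        Submodule.span R (Set.range fun C : Ωs i => e i * classSum R (C : ConjClasses G))
          = Submodule.map (LinearMap.mulLeft R (e i))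
              (Subalgebra.toSubmodule (Subalgebra.center R (MonoidAlgebra R G))) := by
  have hmem : ∀ i c, e i * classSum R c ∈ span R (range (classSum R)) := fun i c => by
    rw [span_range_classSum]
    exact (Subalgebra.center R _).mul_mem (hcentral i) (classSum_mem_center c)
  have hdecomp : ∀ c, ∑ i, e i * classSum R c = classSum R c := fun c => by
    rw [← Finset.sum_mul, hsum, one_mul]
  obtain ⟨f, hli, hspan⟩ := linearIndependent_classSum.exists_linearIndependent_span_eq_of_sum_eq
    (fun i c => e i * classSum R c) hmem hdecomp
  rw [span_range_classSum] at hspan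
  refine ⟨fun i => f ⁻¹' {i}, fun i j hij => (Set.disjoint_singleton.mpr hij).preimage f,
    Set.iUnion_eq_univ_iff.mpr fun c => ⟨f c, rfl⟩, fun i => ⟨?_, ?_⟩⟩
  · have hfiber : (fun C : f ⁻¹' {i} => e i * classSum R C) =
        (fun c => e (f c) * classSum R c) ∘ Subtype.val :=
      funext fun C => by rw [Function.comp_apply, (C.2 : f C = i)]
    exact hfiber ▸ hli.comp _ Subtype.val_injective
  · rw [← hspan]
    exact span_range_mul_fiber_eq_map_mulLeft hidem horth f (classSum R) i
end

section
/- Suppose every nontrivial element a of N has its centralizer contained in N, i.e. C_G(a) ≤ N for all a ∈ N with a ≠ 1. Then the number of conjugacy classes of G satisfies k(G) = k(G/N) + (k(N) − 1)/[G:N]; equivalently, [G:N]·(k(G) − k(G/N)) = k(N) − 1. -/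
open Finset

/-- Burnside-style count: the sum of centralizer sizes equals `k(G) * |G|`. -/
private lemma sum_commute_eq (G : Type*) [Group G] [Fintype G] :
    ∑ g : G, Nat.card {h : G // Commute g h}
      = Nat.card (ConjClasses G) * Nat.card G := by
  classical
  rw [← card_comm_eq_card_conjClasses_mul_card, Nat.card_eq_fintype_card,
    Fintype.card_congr (Equiv.subtypeProdEquivSigmaSubtype Commute),
    Fintype.card_sigma]
  simp [Nat.card_eq_fintype_card]

/-- The fiber of the quotient map over any point is equivalent to `N`. -/
private noncomputable def fiberEquiv {G : Type*} [Group G] (N : Subgroup G) [N.Normal]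
    (q : G ⧸ N) : {g : G // (g : G ⧸ N) = q} ≃ N where
  toFun x := ⟨(Quotient.out q)⁻¹ * x.1, by
    rw [← QuotientGroup.eq, QuotientGroup.out_eq']
    exact x.2.symm⟩
  invFun n := ⟨Quotient.out q * n.1, by
    have : ((Quotient.out q * n.1 : G) : G ⧸ N) = ((Quotient.out q : G) : G ⧸ N) := by
      rw [QuotientGroup.eq]; simp [n.2]
    rw [this, QuotientGroup.out_eq']⟩
  left_inv x := by ext; simp
  right_inv n := by ext; simp

private lemma sum_comp_mk {G : Type*} [Group G] [Fintype G] (N : Subgroup G) [N.Normal]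
    [Fintype (G ⧸ N)] [DecidableEq (G ⧸ N)] (F : G ⧸ N → ℕ) :
    ∑ g : G, F (g : G ⧸ N) = Nat.card N * ∑ q : G ⧸ N, F q := by
  classical
  refine Eq.trans (Finset.sum_fiberwise_of_maps_to' (t := (univ : Finset (G ⧸ N)))
    (g := fun x : G => (x : G ⧸ N)) (fun g _ => mem_univ ((g : G ⧸ N))) F).symm ?_
  refine Eq.trans (Finset.sum_congr rfl fun q _ => ?_) (Finset.mul_sum _ _ _).symm
  rw [Finset.sum_const, smul_eq_mul]
  congr 1
  rw [Nat.card_eq_fintype_card, ← Fintype.card_congr (fiberEquiv N q)]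
  simp [Fintype.card_subtype]

/-- **Class-count form of Theorem 5.3(1) (taken over all blocks).**
Let `G` be a finite group and `N ⊴ G` such that every nontrivial element
`a ∈ N` has its centralizer contained in `N`.  Then the number of conjugacy
classes satisfies `k(G) = k(G/N) + (k(N) - 1)/[G:N]`. -/
theorem stmt13 {G : Type*} [Group G] [Finite G] (N : Subgroup G) [nN : N.Normal]
    (hcent : ∀ a ∈ N, a ≠ 1 → ∀ x : G, x * a * x⁻¹ = a → x ∈ N) :
    (Nat.card (ConjClasses G) : ℚ)
      = Nat.card (ConjClasses (G ⧸ N))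
        + (Nat.card (ConjClasses N) - 1) / N.index := by
  classical
  have : Fintype G := Fintype.ofFinite G
  have : Fintype (G ⧸ N) := Fintype.ofFinite _
  set kG := Nat.card (ConjClasses G) with hkG
  set kN := Nat.card (ConjClasses N) with hkN
  set kQ := Nat.card (ConjClasses (G ⧸ N)) with hkQ
  set n := Nat.card N with hn
  set i := N.index with hi
  have hiQ : Nat.card (G ⧸ N) = i := rfl
  -- trivial intersection of centralizers with N for elements outside N
  have triv : ∀ g : G, g ∉ N → ∀ a ∈ N, Commute g a → a = 1 := by
    intro g hg a haN hc
    by_contra ha1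
    exact hg (hcent a haN ha1 g (by rw [hc.eq, mul_inv_cancel_right]))
  -- transitivity of N-conjugation on nontrivial cosets
  have htrans : ∀ g : G, g ∉ N → ∀ m : G, g⁻¹ * m ∈ N →
      ∃ x : N, (x : G) * g * (x : G)⁻¹ = m := by
    intro g hg m hm
    have hinj : Function.Injective (fun x : N => (⟨g⁻¹ * ((x : G) * g * (x : G)⁻¹), by
        have h1 : g⁻¹ * (x : G) * g ∈ N := nN.conj_mem' x.1 x.2 g
        have h2 : g⁻¹ * ((x : G) * g * (x : G)⁻¹) = (g⁻¹ * (x : G) * g) * (x : G)⁻¹ := by group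
        rw [h2]
        exact N.mul_mem h1 (N.inv_mem x.2)⟩ : N)) := by
      intro x y hxy
      have h1 : g⁻¹ * ((x : G) * g * (x : G)⁻¹) = g⁻¹ * ((y : G) * g * (y : G)⁻¹) :=
        congrArg Subtype.val hxy
      have h2 : (x : G) * g * (x : G)⁻¹ = (y : G) * g * (y : G)⁻¹ := mul_left_cancel h1
      have h3 : Commute g ((y : G)⁻¹ * x) := by
        show g * ((y : G)⁻¹ * x) = ((y : G)⁻¹ * x) * g
        calc g * ((y : G)⁻¹ * (x : G))
            = (y : G)⁻¹ * ((y : G) * g * (y : G)⁻¹) * (x : G) := by group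
          _ = (y : G)⁻¹ * ((x : G) * g * (x : G)⁻¹) * (x : G) := by rw [h2]
          _ = ((y : G)⁻¹ * (x : G)) * g := by group
      have h4 : (y : G)⁻¹ * x = 1 := triv g hg _ (N.mul_mem (N.inv_mem y.2) x.2) h3
      refine Subtype.ext ?_
      calc (x : G) = (y : G) * ((y : G)⁻¹ * (x : G)) := by group
        _ = (y : G) * 1 := by rw [h4]
        _ = (y : G) := by group
    obtain ⟨x, hx⟩ := Finite.surjective_of_injective hinj ⟨g⁻¹ * m, hm⟩
    exact ⟨x, mul_left_cancel (congrArg Subtype.val hx)⟩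
  -- centralizer sizes of the identity
  have c1 : Nat.card {h : G // Commute (1 : G) h} = Nat.card G :=
    Nat.card_congr (Equiv.subtypeUnivEquiv fun h => Commute.one_left h)
  have cN1 : Nat.card {h : N // Commute (1 : N) h} = n :=
    Nat.card_congr (Equiv.subtypeUnivEquiv fun h => Commute.one_left h)
  have cQ1 : Nat.card {h : G ⧸ N // Commute (1 : G ⧸ N) h} = i :=
    Nat.card_congr (Equiv.subtypeUnivEquiv fun h => Commute.one_left h)
  -- inside N
  have cIn : ∀ x : N, (x : G) ≠ 1 →
      Nat.card {h : G // Commute (x : G) h} = Nat.card {h : N // Commute x h} := by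
    intro x hx1
    refine Nat.card_congr ⟨fun h => ⟨⟨h.1,
      hcent x x.2 hx1 h.1 (by rw [h.2.symm.eq, mul_inv_cancel_right])⟩, Subtype.ext h.2⟩,
      fun h => ⟨h.1.1, congrArg Subtype.val h.2⟩, fun h => rfl, fun h => rfl⟩
  -- outside N
  have cOut : ∀ g : G, g ∉ N →
      Nat.card {h : G // Commute g h}
        = Nat.card {h : G ⧸ N // Commute ((g : G ⧸ N)) h} := by
    intro g hg
    refine Nat.card_congr (Equiv.ofBijective
      (fun h => ⟨(h.1 : G ⧸ N), h.2.map (QuotientGroup.mk' N)⟩) ⟨?_, ?_⟩)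
    · rintro ⟨h₁, hc₁⟩ ⟨h₂, hc₂⟩ hh
      have hmem : h₁⁻¹ * h₂ ∈ N := (QuotientGroup.eq).mp (congrArg Subtype.val hh)
      have hc : Commute g (h₁⁻¹ * h₂) := (hc₁.inv_right).mul_right hc₂
      have h4 := triv g hg _ hmem hc
      exact Subtype.ext (inv_mul_eq_one.mp h4)
    · rintro ⟨q, hq⟩
      set x := Quotient.out q with hx
      have hmkx : ((x : G) : G ⧸ N) = q := QuotientGroup.out_eq' q
      have hqc : Commute ((g : G ⧸ N)) ((x : G ⧸ N)) := by rw [hmkx]; exact hq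
      have hmem : (g * x)⁻¹ * (x * g) ∈ N := by
        refine (QuotientGroup.eq).mp ?_
        show ((g * x : G) : G ⧸ N) = ((x * g : G) : G ⧸ N)
        simpa [QuotientGroup.mk_mul] using hqc.eq
      have hmem' : g⁻¹ * (x * g * x⁻¹) ∈ N := by
        have h3 : x * ((g * x)⁻¹ * (x * g)) * x⁻¹ ∈ N := nN.conj_mem _ hmem x
        have h4 : x * ((g * x)⁻¹ * (x * g)) * x⁻¹ = g⁻¹ * (x * g * x⁻¹) := by group
        rwa [h4] at h3
      obtain ⟨y, hy⟩ := htrans g hg (x * g * x⁻¹) hmem'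
      refine ⟨⟨(y : G)⁻¹ * x, ?_⟩, ?_⟩
      · show g * ((y : G)⁻¹ * x) = ((y : G)⁻¹ * x) * g
        calc g * ((y : G)⁻¹ * x)
            = (y : G)⁻¹ * ((y : G) * g * (y : G)⁻¹) * x := by group
          _ = (y : G)⁻¹ * (x * g * x⁻¹) * x := by rw [hy]
          _ = ((y : G)⁻¹ * x) * g := by group
      · refine Subtype.ext ?_
        show (((y : G)⁻¹ * x : G) : G ⧸ N) = q
        have h5 : (((y : G)⁻¹ * x : G) : G ⧸ N) = ((x : G) : G ⧸ N) := by
          rw [QuotientGroup.eq]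
          have h6 : ((y : G)⁻¹ * x)⁻¹ * x = x⁻¹ * (y : G) * x := by group
          rw [h6]
          exact nN.conj_mem' _ y.2 x
        rw [h5, hmkx]
  -- the three Burnside counts
  have SG : ∑ g : G, Nat.card {h : G // Commute g h} = kG * Nat.card G :=
    sum_commute_eq G
  have SN : ∑ x : N, Nat.card {h : N // Commute x h} = kN * n := by
    have := sum_commute_eq N; rwa [← hn] at this
  have SQ : ∑ q : G ⧸ N, Nat.card {h : G ⧸ N // Commute q h} = kQ * i := by
    have := sum_commute_eq (G ⧸ N); rwa [hiQ] at this
  -- split the sum over G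
  have hsplit : ∑ g : G, Nat.card {h : G // Commute g h}
      = (∑ g ∈ univ.filter (· ∈ N), Nat.card {h : G // Commute g h})
        + ∑ g ∈ univ.filter (· ∉ N), Nat.card {h : G // Commute g h} :=
    (Finset.sum_filter_add_sum_filter_not univ _ _).symm
  -- part A : over N
  have hA : (∑ g ∈ univ.filter (· ∈ N), Nat.card {h : G // Commute g h}) + n
      = kN * n + Nat.card G := by
    have e1 : (∑ g ∈ univ.filter (· ∈ N), Nat.card {h : G // Commute g h})
        = ∑ x : N, Nat.card {h : G // Commute (x : G) h} :=
      Finset.sum_subtype _ (by simp) _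
    have e2 : (∑ x : N, Nat.card {h : G // Commute (x : G) h}) + n
        = (∑ x : N, Nat.card {h : N // Commute x h}) + Nat.card G := by
      rw [← Finset.add_sum_erase univ _ (mem_univ (1 : N)),
        ← Finset.add_sum_erase univ (fun x : N => Nat.card {h : N // Commute x h})
          (mem_univ (1 : N))]
      have e3 : ∀ x ∈ (univ : Finset N).erase 1,
          Nat.card {h : G // Commute (x : G) h} = Nat.card {h : N // Commute x h} := by
        intro x hx
        have hx1 : x ≠ 1 := (Finset.mem_erase.mp hx).1
        exact cIn x (fun hc => hx1 (Subtype.ext hc))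
      rw [Finset.sum_congr rfl e3]
      show Nat.card {h : G // Commute ((1 : N) : G) h} + _ + n
          = Nat.card {h : N // Commute (1 : N) h} + _ + Nat.card G
      rw [cN1]
      have : Nat.card {h : G // Commute ((1 : N) : G) h} = Nat.card G := by
        simpa using c1
      rw [this]
      ring
    rw [e1, e2, SN]
  -- part B : outside N
  have hB : (∑ g ∈ univ.filter (· ∉ N), Nat.card {h : G // Commute g h}) + n * i
      = n * (kQ * i) := by
    have e1 : ∀ g ∈ univ.filter (· ∉ N),
        Nat.card {h : G // Commute g h}
          = Nat.card {h : G ⧸ N // Commute ((g : G ⧸ N)) h} := fun g hg =>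
      cOut g (by simpa using hg)
    rw [Finset.sum_congr rfl e1]
    have e2 : ∀ g ∈ univ.filter (· ∈ N),
        Nat.card {h : G ⧸ N // Commute ((g : G ⧸ N)) h} = i := by
      intro g hg
      have : ((g : G) : G ⧸ N) = 1 := (QuotientGroup.eq_one_iff g).mpr (by simpa using hg)
      rw [this, cQ1]
    have e3 : (∑ g ∈ univ.filter (· ∈ N),
        Nat.card {h : G ⧸ N // Commute ((g : G ⧸ N)) h}) = n * i := by
      rw [Finset.sum_congr rfl e2, Finset.sum_const, smul_eq_mul]
      congr 1
      rw [hn, Nat.card_eq_fintype_card, Fintype.card_subtype]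
    calc (∑ g ∈ univ.filter (· ∉ N), Nat.card {h : G ⧸ N // Commute ((g : G ⧸ N)) h}) + n * i
        = (∑ g ∈ univ.filter (· ∉ N), Nat.card {h : G ⧸ N // Commute ((g : G ⧸ N)) h})
          + ∑ g ∈ univ.filter (· ∈ N), Nat.card {h : G ⧸ N // Commute ((g : G ⧸ N)) h} := by
          rw [e3]
      _ = ∑ g : G, Nat.card {h : G ⧸ N // Commute ((g : G ⧸ N)) h} := by
          rw [add_comm]
          exact Finset.sum_filter_add_sum_filter_not univ _ _
      _ = n * ∑ q : G ⧸ N, Nat.card {h : G ⧸ N // Commute q h} :=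
          sum_comp_mk N (fun q => Nat.card {h : G ⧸ N // Commute q h})
      _ = n * (kQ * i) := by rw [SQ]
  -- the master ℕ identity
  have hGcard : Nat.card G = n * i := (Subgroup.card_mul_index N).symm
  have master : kG * (n * i) + n + n * i = n * i + kN * n + n * (kQ * i) := by
    have := hsplit
    rw [SG, hGcard] at this
    omega
  -- pass to ℚ
  have hn0 : (n : ℚ) ≠ 0 := by
    have : 0 < n := Nat.card_pos
    positivity
  have hi0 : (i : ℚ) ≠ 0 := by
    have : i ≠ 0 := Subgroup.index_ne_zero_of_finite
    exact_mod_cast this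
  have masterQ : (kG : ℚ) * (n * i) + n + n * i = n * i + kN * n + n * (kQ * i) := by
    exact_mod_cast master
  have red : (kG : ℚ) * i = kQ * i + (kN - 1) := by
    refine mul_left_cancel₀ hn0 ?_
    linear_combination masterQ
  field_simp
  linear_combination red
end
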